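/- Let m ≥ 1 and consider on ℝ^m the 2-form ω = Σ_{1≤i<j≤m} dℓ_i ∧ dℓ_j, and the perimeter 1-form dp = dℓ₁ + ⋯ + dℓ_m. Then the restriction of ω to the hyperplane {ℓ₁ + ⋯ + ℓ_m = c} is nondegenerate if and only if m is odd. -/

import Mathlib

open Finset

private def Bv {m : ℕ} (u : Fin m → ℝ) (j : Fin m) : ℝ :=
  (∑ i ∈ univ.filter (· < j), u i) - ∑ i ∈ univ.filter (j < ·), u i

private lemma filter_lt_sum {m : ℕ} (j : Fin m) (f : ℕ → ℝ) :
    (∑ i ∈ univ.filter (· < j), f i.val) = ∑ k ∈ Finset.range j.val, f k := by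
  rw [Finset.sum_filter]
  have := Fin.sum_univ_eq_sum_range (fun k => if k < j.val then f k else 0) m
  simp only [Fin.lt_def] at *
  rw [this, ← Finset.sum_filter]
  congr 1
  ext k; simp; intro h; omega

private lemma filter_gt_sum {m : ℕ} (j : Fin m) (f : ℕ → ℝ) :
    (∑ i ∈ univ.filter (j < ·), f i.val) = ∑ k ∈ Finset.Ico (j.val+1) m, f k := by
  rw [Finset.sum_filter]
  have := Fin.sum_univ_eq_sum_range (fun k => if j.val < k then f k else 0) m
  simp only [Fin.lt_def] at *
  rw [this, ← Finset.sum_filter]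
  congr 1
  ext k; simp; omega

private lemma Bv_alt {m : ℕ} (hm : Even m) (j : Fin m) :
    Bv (fun i => (-1:ℝ)^(i:ℕ)) j = 1 := by
  have hlt : (∑ i ∈ univ.filter (· < j), (-1:ℝ)^(i:ℕ)) = ∑ k ∈ Finset.range j.val, (-1:ℝ)^k :=
    filter_lt_sum j (fun k => (-1:ℝ)^k)
  have hgt : (∑ i ∈ univ.filter (j < ·), (-1:ℝ)^(i:ℕ)) = ∑ k ∈ Finset.Ico (j.val+1) m, (-1:ℝ)^k :=
    filter_gt_sum j (fun k => (-1:ℝ)^k)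
  have hsplit : (∑ k ∈ Finset.range (j.val+1), (-1:ℝ)^k)
      + (∑ k ∈ Finset.Ico (j.val+1) m, (-1:ℝ)^k) = ∑ k ∈ Finset.range m, (-1:ℝ)^k := by
    rw [Finset.range_eq_Ico, Finset.range_eq_Ico]
    exact Finset.sum_Ico_consecutive (fun k => (-1:ℝ)^k) (Nat.zero_le (j.val+1)) (by omega : j.val + 1 ≤ m)
  rw [neg_one_geom_sum, neg_one_geom_sum, if_pos hm] at hsplit
  unfold Bv
  rw [hlt, hgt, neg_one_geom_sum]
  have h1 : (∑ k ∈ Finset.Ico (j.val+1) m, (-1:ℝ)^k) = -(if Even (j.val+1) then 0 else 1) := by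
    linarith [hsplit]
  rw [h1]
  rcases Nat.even_or_odd j.val with h | h
  · rw [if_pos h, if_neg (by simpa [Nat.even_add_one] using h)]; ring
  · rw [if_neg (by simpa [Nat.not_even_iff_odd]), if_pos (by simpa [Nat.even_add_one, Nat.not_even_iff_odd])]
    ring

private lemma omega_eq {m : ℕ} (u v : Fin m → ℝ) :
    (∑ i : Fin m, ∑ j : Fin m, if i < j then u i * v j - u j * v i else 0)
      = ∑ j, v j * Bv u j := by
  have h1 : (∑ i : Fin m, ∑ j : Fin m, if i < j then u i * v j - u j * v i else 0)
      = (∑ i : Fin m, ∑ j : Fin m, if i < j then u i * v j else 0)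
        - (∑ i : Fin m, ∑ j : Fin m, if i < j then u j * v i else 0) := by
    rw [← Finset.sum_sub_distrib]
    refine Finset.sum_congr rfl fun i _ => ?_
    rw [← Finset.sum_sub_distrib]
    refine Finset.sum_congr rfl fun j _ => ?_
    split <;> simp
  rw [h1, Finset.sum_comm (γ := Fin m) (f := fun i j => if i < j then u i * v j else 0)]
  simp only [Bv, mul_sub, Finset.sum_sub_distrib, Finset.mul_sum]
  congr 1
  · refine Finset.sum_congr rfl fun j _ => ?_
    rw [Finset.sum_filter]
    refine Finset.sum_congr rfl fun i _ => ?_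
    split <;> ring
  · refine Finset.sum_congr rfl fun i _ => ?_
    rw [Finset.sum_filter]
    refine Finset.sum_congr rfl fun j _ => ?_
    split <;> ring

private lemma sum_delta {m : ℕ} (u : Fin m → ℝ) (a b : Fin m) :
    (∑ j, ((if j = a then (1:ℝ) else 0) - (if j = b then 1 else 0)) * Bv u j)
      = Bv u a - Bv u b := by
  simp [sub_mul, Finset.sum_sub_distrib, ite_mul]

private lemma adjacent {m : ℕ} (u : Fin m → ℝ) (k : ℕ) (hk : k + 1 < m) :
    Bv u ⟨k, by omega⟩ - Bv u ⟨k+1, hk⟩ = -(u ⟨k, by omega⟩ + u ⟨k+1, hk⟩) := by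
  have h1 : (univ.filter (· < (⟨k+1, hk⟩ : Fin m)))
      = insert (⟨k, by omega⟩ : Fin m) (univ.filter (· < (⟨k, by omega⟩ : Fin m))) := by
    ext i; simp [Fin.lt_def, Fin.ext_iff]; omega
  have h2 : (univ.filter ((⟨k, by omega⟩ : Fin m) < ·))
      = insert (⟨k+1, hk⟩ : Fin m) (univ.filter ((⟨k+1, hk⟩ : Fin m) < ·)) := by
    ext i; simp [Fin.lt_def, Fin.ext_iff]; omega
  have n1 : (⟨k, by omega⟩ : Fin m) ∉ univ.filter (· < (⟨k, by omega⟩ : Fin m)) := by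
    simp [Fin.lt_def]
  have n2 : (⟨k+1, hk⟩ : Fin m) ∉ univ.filter ((⟨k+1, hk⟩ : Fin m) < ·) := by
    simp [Fin.lt_def]
  simp only [Bv, h1, h2, Finset.sum_insert n1, Finset.sum_insert n2]
  ring

/-- On `ℝ^m` with `ω = Σ_{i<j} dℓ_i ∧ dℓ_j`, the restriction of `ω`
to a level set of the perimeter `p = ℓ₁ + ⋯ + ℓ_m` (whose tangent space is
`{u | Σ u_i = 0}`) is nondegenerate if and only if `m` is odd. -/
theorem kontsevich_form_nondegenerate_iff_odd (m : ℕ) (hm : 1 ≤ m) :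
    (∀ u : Fin m → ℝ, ∑ i, u i = 0 →
        (∀ v : Fin m → ℝ, ∑ i, v i = 0 →
          (∑ i : Fin m, ∑ j : Fin m,
            if i < j then u i * v j - u j * v i else 0) = 0) →
        u = 0) ↔ Odd m := by
  constructor
  · intro hnd
    by_contra hodd
    have heven : Even m := Nat.not_odd_iff_even.mp hodd
    set u : Fin m → ℝ := fun i => (-1:ℝ)^(i:ℕ) with hu
    have hsum : ∑ i, u i = 0 := by
      rw [hu, Fin.sum_univ_eq_sum_range (fun k => (-1:ℝ)^k) m, neg_one_geom_sum, if_pos heven]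
    have hker : ∀ v : Fin m → ℝ, ∑ i, v i = 0 →
        (∑ i : Fin m, ∑ j : Fin m, if i < j then u i * v j - u j * v i else 0) = 0 := by
      intro v hv
      rw [omega_eq]
      calc ∑ j, v j * Bv u j = ∑ j, v j * 1 := by
            refine Finset.sum_congr rfl fun j _ => ?_
            rw [Bv_alt heven j]
        _ = 0 := by simpa using hv
    have := hnd u hsum hker
    have h0 : u ⟨0, by omega⟩ = 0 := by rw [this]; rfl
    simp [hu] at h0
  · intro hodd u hsum hker
    have hstep : ∀ k (hk : k + 1 < m), u ⟨k+1, hk⟩ = -(u ⟨k, by omega⟩) := by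
      intro k hk
      set a : Fin m := ⟨k, by omega⟩
      set b : Fin m := ⟨k+1, hk⟩
      set v : Fin m → ℝ := fun j => (if j = a then (1:ℝ) else 0) - (if j = b then 1 else 0)
      have hab : a ≠ b := by simp [a, b, Fin.ext_iff]
      have hv : ∑ i, v i = 0 := by
        simp [v, Finset.sum_sub_distrib]
      have := hker v hv
      rw [omega_eq, sum_delta, adjacent u k hk] at this
      have := neg_eq_zero.mp this
      linarith
    have hval : ∀ k (hk : k < m), u ⟨k, hk⟩ = (-1:ℝ)^k * u ⟨0, by omega⟩ := by
      intro k
      induction k with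
      | zero => intro hk; simp
      | succ k ih =>
        intro hk
        rw [hstep k hk, ih (by omega)]
        ring
    have hsum' : ∑ i, u i = (∑ k ∈ Finset.range m, (-1:ℝ)^k) * u ⟨0, by omega⟩ := by
      rw [Finset.sum_mul]
      rw [← Fin.sum_univ_eq_sum_range (fun k => (-1:ℝ)^k * u ⟨0, by omega⟩) m]
      refine Finset.sum_congr rfl fun i _ => ?_
      rw [← hval i.val i.isLt]
    rw [hsum', neg_one_geom_sum, if_neg (Nat.not_even_iff_odd.mpr hodd), one_mul] at hsum
    funext i
    have := hval i.val i.isLt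
    rw [hsum, mul_zero] at this
    simpa using this
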